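/- Let A be a commutative local principal ideal ring of finite length k ≥ 2 with maximal ideal (π) and residue field 𝐤, and let B ⊆ GL_4(A) denote the invertible upper triangular matrices. For a ∈ A, let M(a) be the 4×4 block matrix [[σ, 0],[τ(a), σ]] where σ = [[0,1],[1,0]] and τ(a) = [[π, aπ],[π, π]]. If k = 2, then M(a) and M(a') lie in the same double coset B·M(a)·B = B·M(a')·B if and only if a ≡ a' mod π. -/

import Mathlib

/-!
If `b M(a) c = M(a')` with `b, c` upper triangular, comparing six entries and multiplying them
by `π` (so that every term in `π²` disappears) yields `(a - a') π = 0`. As `π ≠ 0`, the element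
`a - a'` is not a unit, hence lies in the maximal ideal `(π)`. Conversely, `π ∣ a - a'` and
`π² = 0` give `a π = a' π`, i.e. `M(a) = M(a')`.
-/

open Matrix

/-- A matrix is invertible upper triangular. -/
def IsUT {A : Type*} [CommRing A] {n : ℕ} (M : Matrix (Fin n) (Fin n) A) : Prop :=
  M.BlockTriangular id ∧ IsUnit M

/-- Two matrices lie in the same double coset for the subgroup of invertible
upper triangular matrices. -/
def SameDC {A : Type*} [CommRing A] {n : ℕ} (α α' : Matrix (Fin n) (Fin n) A) : Prop :=
  ∃ b c : Matrix (Fin n) (Fin n) A, IsUT b ∧ IsUT c ∧ b * α * c = α'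

section Triangular

variable {A : Type*} [CommRing A] {n : ℕ}

lemma IsUT.apply_eq_zero_of_lt {M : Matrix (Fin n) (Fin n) A} (h : IsUT M) {i j : Fin n}
    (hji : j < i) : M i j = 0 :=
  h.1 hji

lemma IsUT.isUnit_apply_self {M : Matrix (Fin n) (Fin n) A} (h : IsUT M) (i : Fin n) :
    IsUnit (M i i) :=
  IsUnit.prod_univ_iff (f := fun j => M j j) |>.mp
    (det_of_isUpperTriangular h.1 ▸ (isUnit_iff_isUnit_det M).mp h.2) i

lemma isUT_one : IsUT (1 : Matrix (Fin n) (Fin n) A) :=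
  ⟨blockTriangular_one, isUnit_one⟩

lemma SameDC.refl (M : Matrix (Fin n) (Fin n) A) : SameDC M M :=
  ⟨1, 1, isUT_one, isUT_one, by rw [one_mul, mul_one]⟩

end Triangular

/-- The paper's `M(a) = [[σ, 0], [τ(a), σ]]`. -/
def sigmaTau {A : Type*} [CommRing A] (π a : A) : Matrix (Fin 4) (Fin 4) A :=
  !![0, 1, 0, 0; 1, 0, 0, 0; π, a * π, 0, 1; π, π, 1, 0]

lemma sub_mul_eq_zero_of_sameDC_sigmaTau {A : Type*} [CommRing A] {π a a' : A}
    (h2 : π ^ 2 = 0) (h : SameDC (sigmaTau π a) (sigmaTau π a')) : (a - a') * π = 0 := by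
  obtain ⟨b, c, hb, hc, hM⟩ := h
  have entry (i j : Fin 4) := congrFun (congrFun hM i) j
  have E11 := entry 1 1
  have E20 := entry 2 0
  have E21 := entry 2 1
  have E22 := entry 2 2
  have E30 := entry 3 0
  have E31 := entry 3 1
  simp (disch := decide) only [sigmaTau, mul_apply, of_apply, cons_val', cons_val_fin_one,
    Fin.sum_univ_four, hb.apply_eq_zero_of_lt, hc.apply_eq_zero_of_lt, cons_val_zero, cons_val_one,
    cons_val, zero_mul, zero_add, mul_one, mul_zero, add_zero] at E11 E20 E21 E22 E30 E31
  obtain ⟨y, hy⟩ := isUnit_iff_exists_inv.mp (hb.isUnit_apply_self 1)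
  obtain ⟨w, hw⟩ := isUnit_iff_exists_inv.mp (hc.isUnit_apply_self 2)
  obtain ⟨z, hz⟩ := isUnit_iff_exists_inv.mp (hc.isUnit_apply_self 0)
  have hc01 : π * c 0 1 = 0 := by
    linear_combination (π * y) * E11 - (π * c 0 1) * hy -
      (y * ((b 1 2 + b 1 3) * c 0 1 + (b 1 2 * a + b 1 3) * c 1 1)) * h2
  have hb23 : π * b 2 3 = 0 := by
    linear_combination (π * w) * E22 - (π * b 2 3) * hw -
      (w * ((b 2 2 + b 2 3) * c 0 2 + (b 2 2 * a + b 2 3) * c 1 2)) * h2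
  have hb22 : π * b 2 2 = π * b 3 3 := by
    linear_combination z * E20 - z * E30 - (π * (b 2 2 + b 2 3 - b 3 3)) * hz - hb23
  have hb33c11 : π * b 3 3 * c 1 1 = π := by
    linear_combination E31 - b 3 3 * hc01
  linear_combination E21 - (b 2 2 + b 2 3) * hc01 - c 1 1 * hb23 - (a * c 1 1) * hb22 -
    a * hb33c11

lemma IsLocalRing.dvd_of_mul_eq_zero {A : Type*} [CommRing A] [IsLocalRing A] {π x : A}
    (hmax : IsLocalRing.maximalIdeal A = Ideal.span {π}) (hπ : π ≠ 0) (hx : x * π = 0) :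
    π ∣ x := by
  have hmem : x ∈ IsLocalRing.maximalIdeal A := fun hu => hπ (hu.mul_right_eq_zero.mp hx)
  rwa [hmax, Ideal.mem_span_singleton] at hmem

theorem stmt9_general {A : Type*} [CommRing A] [IsLocalRing A]
    (π : A) (hmax : IsLocalRing.maximalIdeal A = Ideal.span {π})
    (h2 : π ^ 2 = 0) (h1 : π ≠ 0) (a a' : A) :
    SameDC !![0, 1, 0, 0; 1, 0, 0, 0; π, a * π, 0, 1; π, π, 1, 0]
        !![0, 1, 0, 0; 1, 0, 0, 0; π, a' * π, 0, 1; π, π, 1, 0] ↔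
      π ∣ (a - a') := by
  change SameDC (sigmaTau π a) (sigmaTau π a') ↔ _
  refine ⟨fun h => IsLocalRing.dvd_of_mul_eq_zero hmax h1
    (sub_mul_eq_zero_of_sameDC_sigmaTau h2 h), fun ⟨t, ht⟩ => ?_⟩
  have hπa : a * π = a' * π := by linear_combination π * ht + t * h2
  rw [sigmaTau, hπa]
  exact SameDC.refl _

theorem stmt9 {A : Type*} [CommRing A] [IsLocalRing A] [IsPrincipalIdealRing A]
    (π : A) (hmax : IsLocalRing.maximalIdeal A = Ideal.span {π})
    (h2 : π ^ 2 = 0) (h1 : π ≠ 0) (a a' : A) :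
    SameDC !![0, 1, 0, 0; 1, 0, 0, 0; π, a * π, 0, 1; π, π, 1, 0]
        !![0, 1, 0, 0; 1, 0, 0, 0; π, a' * π, 0, 1; π, π, 1, 0] ↔
      π ∣ (a - a') :=
  stmt9_general π hmax h2 h1 a a'
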